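/- For every natural number d, the number of ordered pairs of vertices (u,v) of H₁ with dist(u,v) = d equals the number of ordered pairs of vertices (u,v) of H₂ with dist(u,v) = d. In particular, both graphs have exactly 9 edges (18 ordered pairs at distance 1), exactly 6 unordered pairs at distance 2, and diameter 2, so the shortest path kernel cannot distinguish H₁ from H₂. -/
import Mathlib
open SimpleGraph

/-- `H₁` : the triangular prism, on `Fin 6` with edges
`{0,1},{0,2},{1,2},{3,4},{3,5},{4,5},{0,4},{1,5},{2,3}`. -/
def H₁ : SimpleGraph (Fin 6) :=
  SimpleGraph.fromEdgeSet
    {s(0,1), s(0,2), s(1,2), s(3,4), s(3,5), s(4,5), s(0,4), s(1,5), s(2,3)}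

/-- `H₂` : the complete bipartite graph `K₃,₃`, on `Fin 6` with edges
`{0,1},{0,3},{0,5},{2,1},{2,3},{2,5},{4,1},{4,3},{4,5}`. -/
def H₂ : SimpleGraph (Fin 6) :=
  SimpleGraph.fromEdgeSet
    {s(0,1), s(0,3), s(0,5), s(2,1), s(2,3), s(2,5), s(4,1), s(4,3), s(4,5)}

noncomputable instance : Fintype H₁.edgeSet := Fintype.ofFinite _
noncomputable instance : Fintype H₂.edgeSet := Fintype.ofFinite _

instance : DecidableRel H₁.Adj := fun u v =>
  decidable_of_iff
    (s(u,v) ∈ ({s(0,1), s(0,2), s(1,2), s(3,4), s(3,5), s(4,5), s(0,4), s(1,5), s(2,3)} :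
      Finset (Sym2 (Fin 6))) ∧ u ≠ v)
    (by simp [H₁, SimpleGraph.fromEdgeSet_adj])

instance : DecidableRel H₂.Adj := fun u v =>
  decidable_of_iff
    (s(u,v) ∈ ({s(0,1), s(0,3), s(0,5), s(2,1), s(2,3), s(2,5), s(4,1), s(4,3), s(4,5)} :
      Finset (Sym2 (Fin 6))) ∧ u ≠ v)
    (by simp [H₂, SimpleGraph.fromEdgeSet_adj])

lemma dist_eq_two' {V : Type*} {G : SimpleGraph V} {u v : V} (h1 : u ≠ v) (h2 : ¬G.Adj u v)
    (h3 : ∃ w, G.Adj u w ∧ G.Adj w v) : G.dist u v = 2 := by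
  obtain ⟨w, ha, hb⟩ := h3
  have hle : G.dist u v ≤ 2 := SimpleGraph.dist_le (Walk.cons ha (Walk.cons hb Walk.nil))
  have h0 : G.dist u v ≠ 0 := by
    intro h
    rcases (SimpleGraph.dist_eq_zero_iff_eq_or_not_reachable).mp h with h' | h'
    · exact h1 h'
    · exact h' ⟨Walk.cons ha (Walk.cons hb Walk.nil)⟩
  have hne1 : G.dist u v ≠ 1 := fun h => h2 (SimpleGraph.dist_eq_one_iff_adj.mp h)
  omega

lemma cn1 : ∀ u v : Fin 6, u ≠ v → ¬H₁.Adj u v → ∃ w, H₁.Adj u w ∧ H₁.Adj w v := by decide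
lemma cn2 : ∀ u v : Fin 6, u ≠ v → ¬H₂.Adj u v → ∃ w, H₂.Adj u w ∧ H₂.Adj w v := by decide

lemma dist1 (u v : Fin 6) :
    H₁.dist u v = if u = v then 0 else if H₁.Adj u v then 1 else 2 := by
  split_ifs with h h'
  · simp [h]
  · exact SimpleGraph.dist_eq_one_iff_adj.mpr h'
  · exact dist_eq_two' h h' (cn1 u v h h')

lemma dist2 (u v : Fin 6) :
    H₂.dist u v = if u = v then 0 else if H₂.Adj u v then 1 else 2 := by
  split_ifs with h h'
  · simp [h]
  · exact SimpleGraph.dist_eq_one_iff_adj.mpr h'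
  · exact dist_eq_two' h h' (cn2 u v h h')

lemma card1 (d : ℕ) :
    {p : Fin 6 × Fin 6 | H₁.dist p.1 p.2 = d}.ncard =
      (Finset.univ.filter fun p : Fin 6 × Fin 6 =>
        (if p.1 = p.2 then 0 else if H₁.Adj p.1 p.2 then 1 else 2) = d).card := by
  simp_rw [dist1]
  rw [Set.ncard_eq_toFinset_card']
  simp [Set.toFinset_setOf]

lemma card2 (d : ℕ) :
    {p : Fin 6 × Fin 6 | H₂.dist p.1 p.2 = d}.ncard =
      (Finset.univ.filter fun p : Fin 6 × Fin 6 =>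
        (if p.1 = p.2 then 0 else if H₂.Adj p.1 p.2 then 1 else 2) = d).card := by
  simp_rw [dist2]
  rw [Set.ncard_eq_toFinset_card']
  simp [Set.toFinset_setOf]

theorem stmt7 :
    (∀ d : ℕ,
      {p : Fin 6 × Fin 6 | H₁.dist p.1 p.2 = d}.ncard =
        {p : Fin 6 × Fin 6 | H₂.dist p.1 p.2 = d}.ncard) ∧
    H₁.edgeFinset.card = 9 ∧ H₂.edgeFinset.card = 9 ∧
    {p : Fin 6 × Fin 6 | H₁.dist p.1 p.2 = 1}.ncard = 18 ∧
    {p : Fin 6 × Fin 6 | H₂.dist p.1 p.2 = 1}.ncard = 18 ∧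
    {p : Fin 6 × Fin 6 | H₁.dist p.1 p.2 = 2}.ncard = 12 ∧
    {p : Fin 6 × Fin 6 | H₂.dist p.1 p.2 = 2}.ncard = 12 ∧
    (∀ u v : Fin 6, H₁.dist u v ≤ 2) ∧ (∀ u v : Fin 6, H₂.dist u v ≤ 2) := by
  have e1 : H₁.edgeFinset.card = 9 := by
    have hset : H₁.edgeSet = ↑({s(0,1), s(0,2), s(1,2), s(3,4), s(3,5), s(4,5), s(0,4), s(1,5),
        s(2,3)} : Finset (Sym2 (Fin 6))) := by
      ext e
      induction e using Sym2.ind with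
      | _ x y =>
        simp only [SimpleGraph.mem_edgeSet, Finset.mem_coe]
        revert x y; decide
    rw [show H₁.edgeFinset.card = H₁.edgeSet.ncard from (Set.ncard_eq_toFinset_card' _).symm,
      hset, Set.ncard_coe_finset]
    decide
  have e2 : H₂.edgeFinset.card = 9 := by
    have hset : H₂.edgeSet = ↑({s(0,1), s(0,3), s(0,5), s(2,1), s(2,3), s(2,5), s(4,1), s(4,3),
        s(4,5)} : Finset (Sym2 (Fin 6))) := by
      ext e
      induction e using Sym2.ind with
      | _ x y =>
        simp only [SimpleGraph.mem_edgeSet, Finset.mem_coe]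
        revert x y; decide
    rw [show H₂.edgeFinset.card = H₂.edgeSet.ncard from (Set.ncard_eq_toFinset_card' _).symm,
      hset, Set.ncard_coe_finset]
    decide
  refine ⟨?_, e1, e2, ?_, ?_, ?_, ?_, ?_, ?_⟩
  · intro d
    rw [card1, card2]
    match d with
    | 0 => decide
    | 1 => decide
    | 2 => decide
    | (n+3) =>
      rw [Finset.filter_false_of_mem, Finset.filter_false_of_mem]
      all_goals intro p _; split_ifs <;> first | exact not_false | omega
  · rw [card1]; decide
  · rw [card2]; decide
  · rw [card1]; decide
  · rw [card2]; decide
  · intro u v; rw [dist1]; split_ifs <;> omega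
  · intro u v; rw [dist2]; split_ifs <;> omega
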